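/- arXiv:2512.05766 — 2 statements merged into one kernel-verified Lean document; each statement's English description precedes it below -/
import Mathlib

section
/- Let N ≥ 3 be an integer and λ > 0 a real number. Set β := (-(N-2) + √((N-2)² + 4λ))/2 and μ := √((N-2)² + 4λ)·(2 + √((N-2)² + 4λ))/(N(N-2)), and define R(ρ) := ρ^β (1 + ρ²)^{1 - N/2 - β} for ρ > 0. Then R is twice differentiable on (0, ∞) and satisfies the radial linearized equation: for every ρ > 0, R''(ρ) + ((N-1)/ρ)·R'(ρ) + (−λ/ρ² + μ·N(N−2)·(1+ρ²)^{−2})·R(ρ) = 0; equivalently, (ρ^{N-1}R')' + ρ^{N-1}(−λρ^{−2} + μ·N(N−2)(1+ρ²)^{−2})R = 0 on (0, ∞). -/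
/-!
Write `R(ρ) = ρ^β (1+ρ²)^γ` with `γ = 1 - N/2 - β`. Its logarithmic derivative is
`L = β/ρ + 2γρ/(1+ρ²)`, so `R' = L R` and `R'' = (L' + L²) R`, and the radial equation divided
by `R` becomes a rational identity in `ρ`. That identity holds as soon as `λ = β(β+N-2)` and
`μ N(N-2) = (2β+N-2)(2β+N)`, and both follow from `2β + N - 2 = √((N-2)² + 4λ)`.
The divergence form is the same equation, since `(ρ^{N-1} R')' = ρ^{N-1} (R'' + (N-1)/ρ R')`.
-/

open Set Filter Topology Real

section RadialProfile

variable {n β γ lam m x : ℝ}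

theorem contDiffOn_rpow_mul_one_add_sq_rpow {k : WithTop ℕ∞} :
    ContDiffOn ℝ k (fun y : ℝ => y ^ β * (1 + y ^ 2) ^ γ) (Ioi 0) := fun y hy =>
  ((contDiffAt_rpow_const_of_ne (ne_of_gt hy)).mul
    ((contDiff_const.add (contDiff_id.pow 2)).contDiffAt.rpow_const_of_ne
      (by positivity))).contDiffWithinAt

theorem hasDerivAt_rpow_mul_one_add_sq_rpow (hx : 0 < x) :
    HasDerivAt (fun y : ℝ => y ^ β * (1 + y ^ 2) ^ γ)
      ((β / x + 2 * γ * x / (1 + x ^ 2)) * (x ^ β * (1 + x ^ 2) ^ γ)) x := by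
  have hq : 0 < 1 + x ^ 2 := by positivity
  have hsq : HasDerivAt (fun y : ℝ => 1 + y ^ 2) (2 * x) x := by
    simpa using (hasDerivAt_pow 2 x).const_add 1
  refine ((hasDerivAt_rpow_const (p := β) (Or.inl hx.ne')).mul
    (hsq.rpow_const (p := γ) (Or.inl hq.ne'))).congr_deriv ?_
  rw [rpow_sub_one hx.ne', rpow_sub_one hq.ne']
  field_simp

theorem hasDerivAt_div_add_mul_div_one_add_sq (hx : x ≠ 0) :
    HasDerivAt (fun y : ℝ => β / y + 2 * γ * y / (1 + y ^ 2))
      (-β / x ^ 2 + 2 * γ * (1 - x ^ 2) / (1 + x ^ 2) ^ 2) x := by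
  have hq : 1 + x ^ 2 ≠ 0 := by positivity
  have hsq : HasDerivAt (fun y : ℝ => 1 + y ^ 2) (2 * x) x := by
    simpa using (hasDerivAt_pow 2 x).const_add 1
  refine (((hasDerivAt_id x).inv hx).const_mul β |>.add
    (((hasDerivAt_id x).const_mul (2 * γ)).div hsq hq)).congr_of_eventuallyEq ?_ |>.congr_deriv ?_
  · filter_upwards with y
    simp [div_eq_mul_inv]
  · simp only [id]
    field_simp
    ring

theorem hasDerivAt_deriv_rpow_mul_one_add_sq_rpow (hx : 0 < x) :
    HasDerivAt (deriv fun y : ℝ => y ^ β * (1 + y ^ 2) ^ γ)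
      ((-β / x ^ 2 + 2 * γ * (1 - x ^ 2) / (1 + x ^ 2) ^ 2
          + (β / x + 2 * γ * x / (1 + x ^ 2)) ^ 2) * (x ^ β * (1 + x ^ 2) ^ γ)) x := by
  have hderiv : (deriv fun y : ℝ => y ^ β * (1 + y ^ 2) ^ γ) =ᶠ[𝓝 x]
      fun y => (β / y + 2 * γ * y / (1 + y ^ 2)) * (y ^ β * (1 + y ^ 2) ^ γ) := by
    filter_upwards [lt_mem_nhds hx] with y hy
    exact (hasDerivAt_rpow_mul_one_add_sq_rpow hy).deriv
  refine ((hasDerivAt_div_add_mul_div_one_add_sq hx.ne').mul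
    (hasDerivAt_rpow_mul_one_add_sq_rpow hx)).congr_of_eventuallyEq hderiv |>.congr_deriv ?_
  ring

theorem radial_equation_rpow_mul_one_add_sq_rpow (hx : 0 < x) (hlam : lam = β * (β + n - 2))
    (hm : m = (2 * β + n - 2) * (2 * β + n)) :
    deriv (deriv fun y : ℝ => y ^ β * (1 + y ^ 2) ^ (1 - n / 2 - β)) x
      + ((n - 1) / x) * deriv (fun y : ℝ => y ^ β * (1 + y ^ 2) ^ (1 - n / 2 - β)) x
      + (-lam / x ^ 2 + m * ((1 + x ^ 2) ^ 2)⁻¹) * (x ^ β * (1 + x ^ 2) ^ (1 - n / 2 - β))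
      = 0 := by
  rw [(hasDerivAt_deriv_rpow_mul_one_add_sq_rpow hx).deriv,
    (hasDerivAt_rpow_mul_one_add_sq_rpow hx).deriv, hlam, hm]
  field_simp
  ring

end RadialProfile

theorem deriv_rpow_const_mul {g : ℝ → ℝ} {a x : ℝ} (hx : 0 < x) (hg : DifferentiableAt ℝ g x) :
    deriv (fun t => t ^ a * g t) x = x ^ a * (deriv g x + a / x * g x) := by
  rw [((hasDerivAt_rpow_const (p := a) (Or.inl hx.ne')).fun_mul hg.hasDerivAt).deriv,
    rpow_sub_one hx.ne']
  ring

section Constants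

variable {n lam β μ : ℝ}

theorem eq_mul_of_eq_neg_add_sqrt (hlam : 0 ≤ (n - 2) ^ 2 + 4 * lam)
    (hβ : β = (-(n - 2) + √((n - 2) ^ 2 + 4 * lam)) / 2) :
    lam = β * (β + n - 2) := by
  have hsq := sq_sqrt hlam
  rw [hβ]
  linear_combination -hsq / 4

theorem mul_mul_eq_of_eq_sqrt_mul (hn : n * (n - 2) ≠ 0)
    (hβ : β = (-(n - 2) + √((n - 2) ^ 2 + 4 * lam)) / 2)
    (hμ : μ = √((n - 2) ^ 2 + 4 * lam) * (2 + √((n - 2) ^ 2 + 4 * lam)) / (n * (n - 2))) :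
    μ * n * (n - 2) = (2 * β + n - 2) * (2 * β + n) := by
  rw [hμ, mul_assoc, div_mul_cancel₀ _ hn, hβ]
  ring

end Constants

/-- The radial function `R(ρ) = ρ^β (1+ρ²)^{1-N/2-β}`, with
`β = (-(N-2) + √((N-2)²+4λ))/2` and
`μ = √((N-2)²+4λ)(2+√((N-2)²+4λ))/(N(N-2))`, is twice differentiable on `(0,∞)` and
solves the radial linearized equation
`R'' + ((N-1)/ρ) R' + (-λ/ρ² + μ N(N-2)(1+ρ²)^{-2}) R = 0`; equivalently
`(ρ^{N-1} R')' + ρ^{N-1}(-λ ρ^{-2} + μ N(N-2)(1+ρ²)^{-2}) R = 0` on `(0,∞)`. -/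
theorem stmt_10 (N : ℕ) (hN : 3 ≤ N) (lam : ℝ) (hlam : 0 < lam)
    (β μ : ℝ)
    (hβ : β = (-((N : ℝ) - 2) + Real.sqrt (((N : ℝ) - 2) ^ 2 + 4 * lam)) / 2)
    (hμ : μ = Real.sqrt (((N : ℝ) - 2) ^ 2 + 4 * lam)
        * (2 + Real.sqrt (((N : ℝ) - 2) ^ 2 + 4 * lam)) / ((N : ℝ) * ((N : ℝ) - 2)))
    (R : ℝ → ℝ)
    (hR : ∀ ρ : ℝ, 0 < ρ → R ρ = ρ ^ β * (1 + ρ ^ 2) ^ (1 - (N : ℝ) / 2 - β)) :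
    ContDiffOn ℝ 2 R (Set.Ioi 0) ∧
      (∀ ρ : ℝ, 0 < ρ →
        deriv (deriv R) ρ + (((N : ℝ) - 1) / ρ) * deriv R ρ
          + (-lam / ρ ^ 2 + μ * (N : ℝ) * ((N : ℝ) - 2) * ((1 + ρ ^ 2) ^ 2)⁻¹) * R ρ = 0) ∧
      (∀ ρ : ℝ, 0 < ρ →
        deriv (fun t : ℝ => t ^ ((N : ℝ) - 1) * deriv R t) ρ
          + ρ ^ ((N : ℝ) - 1)
            * (-lam / ρ ^ 2 + μ * (N : ℝ) * ((N : ℝ) - 2) * ((1 + ρ ^ 2) ^ 2)⁻¹) * R ρ = 0) := by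
  have hN3 : (3 : ℝ) ≤ N := by exact_mod_cast hN
  have hlam' := eq_mul_of_eq_neg_add_sqrt (by positivity) hβ
  have hμ' := mul_mul_eq_of_eq_sqrt_mul (by nlinarith) hβ hμ
  set f := fun y : ℝ => y ^ β * (1 + y ^ 2) ^ (1 - (N : ℝ) / 2 - β)
  have hRf : EqOn R f (Ioi 0) := hR
  have hR' := hRf.deriv isOpen_Ioi
  have hode := fun ρ (hρ : 0 < ρ) => radial_equation_rpow_mul_one_add_sq_rpow hρ hlam' hμ'
  refine ⟨contDiffOn_rpow_mul_one_add_sq_rpow.congr hRf, fun ρ hρ => ?_, fun ρ hρ => ?_⟩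
  · rw [hR'.deriv isOpen_Ioi hρ, hR' hρ, hRf hρ]
    exact hode ρ hρ
  · have hdiv : EqOn (fun t : ℝ => t ^ ((N : ℝ) - 1) * deriv R t)
        (fun t : ℝ => t ^ ((N : ℝ) - 1) * deriv f t) (Ioi 0) := fun t ht => by
      simp only [hR' ht]
    rw [hdiv.deriv isOpen_Ioi hρ, deriv_rpow_const_mul hρ
      (hasDerivAt_deriv_rpow_mul_one_add_sq_rpow hρ).differentiableAt, hRf hρ]
    linear_combination ρ ^ ((N : ℝ) - 1) * hode ρ hρ
end

section
/- Let α ∈ (0, 2) with α ≠ 1. Then for every r ∈ (0, π/2) one has min{1, sin(απ/2)/α} < sin(αr)/(α·sin r) < max{1, sin(απ/2)/α}. -/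
/-!
With `c = 1 - α`, everything reduces to signs of functions vanishing at `0` whose derivatives
have a sign on `(0, π/2)`. First, `c (sin (α r) - α sin r) > 0`, because its derivative is
`c α (cos (α r) - cos r)` and `cos` decreases on `[0, π]`. Second, the derivative of
`sin (α r) / sin r` is `W / sin² r`, where `W` is the Wronskian of `sin` and `sin (α ·)`, and
`W' = (1 - α²) sin r sin (α r)`; so `c W > 0` and `c sin (α r) / sin r` increases up to its value
`c sin (α π / 2)` at `π / 2`. Hence `sin (α r) / (α sin r)` lies strictly between `1` and
`sin (α π / 2) / α`, on the side of `1` given by the sign of `c`.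
-/

open Real Set

lemma min_lt_and_lt_max_of_mul_pos {a b c v : ℝ} (ha : 0 < c * (v - a)) (hb : 0 < c * (b - v)) :
    min a b < v ∧ v < max a b := by
  rcases pos_and_pos_or_neg_and_neg_of_mul_pos ha with ⟨hc, hva⟩ | ⟨hc, hva⟩
  · have hvb := pos_of_mul_pos_right hb hc.le
    exact ⟨min_lt_of_left_lt (by linarith), lt_max_of_lt_right (by linarith)⟩
  · have hvb := neg_of_mul_pos_right hb hc.le
    exact ⟨min_lt_of_right_lt (by linarith), lt_max_of_lt_left (by linarith)⟩

lemma pos_of_hasDerivAt_pos {g g' : ℝ → ℝ} {a b x : ℝ} (hg : ∀ y, HasDerivAt g (g' y) y)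
    (hg' : ∀ y ∈ Ioo a b, 0 < g' y) (ha : g a = 0) (hx : x ∈ Ioc a b) : 0 < g x := by
  have hmono : StrictMonoOn g (Icc a b) :=
    strictMonoOn_of_hasDerivWithinAt_pos (convex_Icc a b)
      (HasDerivAt.continuousOn fun y _ => hg y) (fun y _ => (hg y).hasDerivWithinAt)
      (by rwa [interior_Icc])
  simpa [ha] using hmono (left_mem_Icc.2 (hx.1.le.trans hx.2)) (Ioc_subset_Icc_self hx) hx.1

section Comparison

variable {α x : ℝ}

lemma sin_pos_of_mem_Ioc (hx : x ∈ Ioc 0 (π / 2)) : 0 < sin x :=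
  sin_pos_of_pos_of_lt_pi hx.1 (by linarith [pi_pos, hx.2])

lemma sin_mul_pos_of_mem_Ioc (hα : α ∈ Ioo 0 2) (hx : x ∈ Ioc 0 (π / 2)) : 0 < sin (α * x) :=
  sin_pos_of_pos_of_lt_pi (mul_pos hα.1 hx.1)
    (by nlinarith [pi_pos, hα.2, mul_le_mul_of_nonneg_left hx.2 hα.1.le])

lemma one_sub_mul_cos_mul_sub_cos_pos (hα : α ∈ Ioo 0 2) (hα1 : α ≠ 1) (hx : x ∈ Ioo 0 (π / 2)) :
    0 < (1 - α) * (cos (α * x) - cos x) := by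
  have hαx : α * x ∈ Icc 0 π := ⟨by nlinarith [hα.1, hx.1], by nlinarith [hα.2, hx.1, hx.2]⟩
  have hx' : x ∈ Icc 0 π := ⟨hx.1.le, by linarith [pi_pos, hx.2]⟩
  rcases hα1.lt_or_gt with h | h
  · have := strictAntiOn_cos hαx hx' (by nlinarith [hx.1])
    exact mul_pos (by linarith) (by linarith)
  · have := strictAntiOn_cos hx' hαx (by nlinarith [hx.1])
    exact mul_pos_of_neg_of_neg (by linarith) (by linarith)

lemma one_sub_mul_sin_mul_sub_mul_sin_pos (hα : α ∈ Ioo 0 2) (hα1 : α ≠ 1)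
    (hx : x ∈ Ioc 0 (π / 2)) : 0 < (1 - α) * (sin (α * x) - α * sin x) := by
  refine pos_of_hasDerivAt_pos (g := fun y => (1 - α) * (sin (α * y) - α * sin y))
    (g' := fun y => α * ((1 - α) * (cos (α * y) - cos y))) (fun y => ?_)
    (fun y hy => mul_pos hα.1 (one_sub_mul_cos_mul_sub_cos_pos hα hα1 hy)) (by simp) hx
  have := (((hasDerivAt_id y).const_mul α).sin.sub ((hasDerivAt_sin y).const_mul α)).const_mul
    (1 - α)
  exact this.congr_deriv (by simp only [id]; ring)

noncomputable def sinWronskian (α x : ℝ) : ℝ :=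
  sin x * (α * cos (α * x)) - cos x * sin (α * x)

lemma hasDerivAt_sinWronskian (α x : ℝ) :
    HasDerivAt (sinWronskian α) ((1 - α ^ 2) * (sin x * sin (α * x))) x := by
  have hsin := ((hasDerivAt_id x).const_mul α).sin
  have hcos := ((hasDerivAt_id x).const_mul α).cos
  exact (((hasDerivAt_sin x).mul (hcos.const_mul α)).sub ((hasDerivAt_cos x).mul hsin)).congr_deriv
    (by simp only [id]; ring)

lemma one_sub_mul_sinWronskian_pos (hα : α ∈ Ioo 0 2) (hα1 : α ≠ 1) (hx : x ∈ Ioc 0 (π / 2)) :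
    0 < (1 - α) * sinWronskian α x := by
  refine pos_of_hasDerivAt_pos (g := fun y => (1 - α) * sinWronskian α y)
    (fun y => (hasDerivAt_sinWronskian α y).const_mul (1 - α))
    (fun y hy => ?_) (by simp [sinWronskian]) hx
  have hsin := sin_pos_of_mem_Ioc (Ioo_subset_Ioc_self hy)
  have hsinα := sin_mul_pos_of_mem_Ioc hα (Ioo_subset_Ioc_self hy)
  have hα0 : 0 < 1 + α := by linarith [hα.1]
  have hα1' : 1 - α ≠ 0 := sub_ne_zero.2 hα1.symm
  calc 0 < (1 - α) ^ 2 * (1 + α) * (sin y * sin (α * y)) := by positivity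
    _ = (1 - α) * ((1 - α ^ 2) * (sin y * sin (α * y))) := by ring

lemma strictMonoOn_one_sub_mul_sin_mul_div_sin (hα : α ∈ Ioo 0 2) (hα1 : α ≠ 1) :
    StrictMonoOn (fun x => (1 - α) * (sin (α * x) / sin x)) (Ioc 0 (π / 2)) := by
  have hderiv : ∀ x ∈ Ioc 0 (π / 2), HasDerivAt (fun x => (1 - α) * (sin (α * x) / sin x))
      ((1 - α) * sinWronskian α x / sin x ^ 2) x := fun x hx =>
    ((((hasDerivAt_id x).const_mul α).sin.div (hasDerivAt_sin x)
      (sin_pos_of_mem_Ioc hx).ne').const_mul (1 - α)).congr_deriv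
      (by simp only [id, sinWronskian]; ring)
  refine strictMonoOn_of_hasDerivWithinAt_pos (convex_Ioc 0 (π / 2))
    (f' := fun x => (1 - α) * sinWronskian α x / sin x ^ 2)
    (HasDerivAt.continuousOn hderiv) (fun x hx => ?_) (fun x hx => ?_) <;>
    rw [interior_Ioc] at hx
  · exact (hderiv x (Ioo_subset_Ioc_self hx)).hasDerivWithinAt
  · have hsin := sin_pos_of_mem_Ioc (Ioo_subset_Ioc_self hx)
    exact div_pos (one_sub_mul_sinWronskian_pos hα hα1 (Ioo_subset_Ioc_self hx)) (by positivity)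

end Comparison

/-- For `α ∈ (0,2)`, `α ≠ 1`, and `r ∈ (0, π/2)` one has
`min{1, sin(απ/2)/α} < sin(αr)/(α sin r) < max{1, sin(απ/2)/α}`. -/
theorem stmt_13 (α : ℝ) (hα : α ∈ Set.Ioo (0 : ℝ) 2) (hα1 : α ≠ 1) :
    ∀ r : ℝ, r ∈ Set.Ioo 0 (π / 2) →
      min 1 (Real.sin (α * (π / 2)) / α) < Real.sin (α * r) / (α * Real.sin r) ∧
      Real.sin (α * r) / (α * Real.sin r) < max 1 (Real.sin (α * (π / 2)) / α) := by
  intro r hr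
  have hr' : r ∈ Ioc 0 (π / 2) := Ioo_subset_Ioc_self hr
  have hsin := sin_pos_of_mem_Ioc hr'
  have hαsin : 0 < α * sin r := mul_pos hα.1 hsin
  have hlower := one_sub_mul_sin_mul_sub_mul_sin_pos hα hα1 hr'
  have hupper := strictMonoOn_one_sub_mul_sin_mul_div_sin hα hα1 hr'
    (right_mem_Ioc.2 (by linarith [pi_pos])) hr.2
  simp only [sin_pi_div_two, div_one] at hupper
  refine min_lt_and_lt_max_of_mul_pos (c := 1 - α) ?_ ?_
  · rw [div_sub_one hαsin.ne', ← mul_div_assoc]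
    exact div_pos hlower hαsin
  · rw [show (1 - α) * (sin (α * (π / 2)) / α - sin (α * r) / (α * sin r))
        = ((1 - α) * sin (α * (π / 2)) - (1 - α) * (sin (α * r) / sin r)) / α by
      field_simp]
    exact div_pos (sub_pos.2 hupper) hα.1
end
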